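/- Let Γ, Γ' be finite graphs and p a prime. If the pro-p completions of A(Γ) and A(Γ') are isomorphic, then Γ and Γ' have the same number of vertices and the same number of edges; indeed H^1 and H^2 of the completions with Z/p coefficients have ranks |V(Γ)| and |E(Γ)| respectively. -/

import Mathlib

open scoped commutatorElement in
/-- The defining relations of the right-angled Artin group on a graph `Γ`:
commutators of generators spanning an edge. -/
def raagRels {V : Type*} (Γ : SimpleGraph V) : Set (FreeGroup V) :=
  {r | ∃ v w : V, Γ.Adj v w ∧ r = ⁅FreeGroup.of v, FreeGroup.of w⁆}

/-- The right-angled Artin group `A(Γ)` of a graph `Γ`. -/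
def RAAG {V : Type*} (Γ : SimpleGraph V) : Type _ := PresentedGroup (raagRels Γ)

instance {V : Type*} (Γ : SimpleGraph V) : Group (RAAG Γ) :=
  QuotientGroup.Quotient.group _

/-- The generator of `A(Γ)` corresponding to a vertex. -/
def RAAG.gen {V : Type*} (Γ : SimpleGraph V) (v : V) : RAAG Γ :=
  PresentedGroup.of (rels := raagRels Γ) v

/-- The defining relations of the right-angled Coxeter group on a graph `Γ`:
edge commutators together with the squares of all generators. -/
def racgRels {V : Type*} (Γ : SimpleGraph V) : Set (FreeGroup V) :=
  raagRels Γ ∪ {r | ∃ v : V, r = (FreeGroup.of v) ^ 2}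

/-- The right-angled Coxeter group `C(Γ)` of a graph `Γ`. -/
def RACG {V : Type*} (Γ : SimpleGraph V) : Type _ := PresentedGroup (racgRels Γ)

instance {V : Type*} (Γ : SimpleGraph V) : Group (RACG Γ) :=
  QuotientGroup.Quotient.group _

/-- The generator of `C(Γ)` corresponding to a vertex. -/
def RACG.gen {V : Type*} (Γ : SimpleGraph V) (v : V) : RACG Γ :=
  PresentedGroup.of (rels := racgRels Γ) v

/-- A topological group is a pro-`p` group if it is a compact, Hausdorff, totally
disconnected topological group all of whose continuous finite quotients are `p`-groups. -/
structure IsProPGroup (p : ℕ) (K : Type*) [Group K] [TopologicalSpace K] : Prop where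
  topGroup : IsTopologicalGroup K
  compact : CompactSpace K
  t2 : T2Space K
  totallyDisconnected : TotallyDisconnectedSpace K
  quot_isPGroup : ∀ (N : Subgroup K) [N.Normal], IsOpen (N : Set K) → IsPGroup p (K ⧸ N)

/-- `ι : G →* K` exhibits the pro-`p` group `K` as the pro-`p` completion of the
discrete group `G`. -/
structure IsProPCompletion (p : ℕ) (G : Type*) [Group G] (K : Type*) [Group K]
    [TopologicalSpace K] (ι : G →* K) : Prop where
  proP : IsProPGroup p K
  dense : DenseRange ι
  universal : ∀ (F : Type) [Group F] [Finite F] [TopologicalSpace F] [DiscreteTopology F],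
    IsPGroup p F → ∀ f : G →* F, ∃! φ : K →* F, Continuous φ ∧ φ.comp ι = f

/-- The pull-back `P = {(g,h) ∈ G × H : ι g = π h}` of a pair of homomorphisms
`ι : G →* K`, `π : H →* K`, as a subgroup of `G × H`. -/
def extensionPullback {G H K : Type*} [Group G] [Group H] [Group K]
    (ι : G →* K) (π : H →* K) : Subgroup (G × H) where
  carrier := {x | ι x.1 = π x.2}
  one_mem' := by simp
  mul_mem' := by
    intro a b ha hb
    simp only [Set.mem_setOf_eq, Prod.fst_mul, Prod.snd_mul, map_mul] at *
    rw [ha, hb]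
  inv_mem' := by
    intro a ha
    simp only [Set.mem_setOf_eq, Prod.fst_inv, Prod.snd_inv, map_inv] at *
    rw [ha]
set_option linter.unusedSectionVars false
section ContinuousCohomology

/-- Composition with a map commutes with `Fin.contractNth` for compatible operations. -/
theorem comp_contractNth' {n : ℕ} {α β : Type*} (f : α → β) (op : α → α → α)
    (op' : β → β → β) (hf : ∀ x y, f (op x y) = op' (f x) (f y)) (j : Fin (n + 1))
    (g : Fin (n + 1) → α) :
    f ∘ Fin.contractNth j op g = Fin.contractNth j op' (f ∘ g) := by
  funext k
  simp only [Function.comp_apply, Fin.contractNth]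
  split_ifs <;> simp [hf]

/-- The (multiplicative) group structure that older Mathlib put on `AddAut A`
(multiplication is composition); current Mathlib makes `AddAut A` an additive group. -/
instance AddAut.group {A : Type*} [Add A] : Group (AddAut A) where
  mul g h := AddEquiv.trans h g
  one := AddEquiv.refl _
  inv := AddEquiv.symm
  mul_assoc _ _ _ := rfl
  one_mul _ := rfl
  mul_one _ := rfl
  inv_mul_cancel := AddEquiv.self_trans_symm

variable {K : Type*} [Group K] [TopologicalSpace K]
variable {M : Type*} [AddCommGroup M] [TopologicalSpace M] [IsTopologicalAddGroup M]

/-- The differential of the complex of inhomogeneous cochains of `K` with coefficients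
in `M`, the action being given by `ρ : K →* AddAut M`. -/
def cochainD (ρ : K →* AddAut M) (n : ℕ) (f : (Fin n → K) → M) : (Fin (n + 1) → K) → M :=
  fun g => ρ (g 0) (f fun i => g i.succ) +
    ∑ j : Fin (n + 1), ((-1 : ℤ) ^ ((j : ℕ) + 1)) • f (Fin.contractNth j (· * ·) g)

theorem cochainD_add (ρ : K →* AddAut M) (n : ℕ) (f g : (Fin n → K) → M) :
    cochainD ρ n (f + g) = cochainD ρ n f + cochainD ρ n g := by
  funext x
  simp only [cochainD, Pi.add_apply, map_add, smul_add, Finset.sum_add_distrib]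
  abel

theorem cochainD_zero (ρ : K →* AddAut M) (n : ℕ) :
    cochainD ρ n (0 : (Fin n → K) → M) = 0 := by
  funext x
  simp [cochainD]

theorem cochainD_neg (ρ : K →* AddAut M) (n : ℕ) (f : (Fin n → K) → M) :
    cochainD ρ n (-f) = -cochainD ρ n f := by
  funext x
  simp only [cochainD, Pi.neg_apply, map_neg, smul_neg, Finset.sum_neg_distrib]
  abel

/-- The continuous `n`-cocycles of `K` with coefficients in `(M, ρ)`. -/
def contCocycles (ρ : K →* AddAut M) (n : ℕ) : AddSubgroup ((Fin n → K) → M) where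
  carrier := {f | Continuous f ∧ cochainD ρ n f = 0}
  add_mem' := by
    rintro f g ⟨hfc, hfd⟩ ⟨hgc, hgd⟩
    exact ⟨hfc.add hgc, by rw [cochainD_add, hfd, hgd, add_zero]⟩
  zero_mem' := ⟨continuous_const, cochainD_zero ρ n⟩
  neg_mem' := by
    rintro f ⟨hfc, hfd⟩
    exact ⟨hfc.neg, by rw [cochainD_neg, hfd, neg_zero]⟩

/-- The continuous `n`-coboundaries of `K` with coefficients in `(M, ρ)`. -/
def contCoboundaries (ρ : K →* AddAut M) : (n : ℕ) → AddSubgroup ((Fin n → K) → M)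
  | 0 => ⊥
  | (n + 1) =>
    { carrier := {f | ∃ h : (Fin n → K) → M, Continuous h ∧ cochainD ρ n h = f}
      add_mem' := by
        rintro f g ⟨a, hac, had⟩ ⟨b, hbc, hbd⟩
        exact ⟨a + b, hac.add hbc, by rw [cochainD_add, had, hbd]⟩
      zero_mem' := ⟨0, continuous_const, cochainD_zero ρ n⟩
      neg_mem' := by
        rintro f ⟨a, hac, had⟩
        exact ⟨-a, hac.neg, by rw [cochainD_neg, had]⟩ }

/-- The continuous cohomology `Hⁿ(K; M)`: continuous cocycles modulo continuous
coboundaries. -/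
def contH (ρ : K →* AddAut M) (n : ℕ) : Type _ :=
  contCocycles ρ n ⧸ (contCoboundaries ρ n).addSubgroupOf (contCocycles ρ n)

noncomputable instance (ρ : K →* AddAut M) (n : ℕ) : AddCommGroup (contH ρ n) := by
  unfold contH; infer_instance

variable {G : Type*} [Group G] [TopologicalSpace G]

theorem cochainD_pull (ρ : K →* AddAut M) (φ : G →* K) (n : ℕ) (f : (Fin n → K) → M) :
    cochainD (ρ.comp φ) n (fun g => f (φ ∘ g)) = fun g => cochainD ρ n f (φ ∘ g) := by
  funext g
  simp only [cochainD, MonoidHom.comp_apply, Function.comp_apply]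
  congr 1
  exact Finset.sum_congr rfl fun j _ => by
    rw [← comp_contractNth' φ (· * ·) (· * ·) (fun x y => map_mul φ x y) j g]

/-- Pull-back of continuous cocycles along a continuous homomorphism. -/
def pullCocycles (ρ : K →* AddAut M) (φ : G →* K) (hφ : Continuous φ) (n : ℕ) :
    contCocycles ρ n →+ contCocycles (ρ.comp φ) n :=
  AddMonoidHom.mk'
    (fun f => ⟨fun g => f.1 (φ ∘ g),
      ⟨f.2.1.comp (continuous_pi fun i => hφ.comp (continuous_apply i)),
        by rw [cochainD_pull ρ φ n f.1]; funext g; rw [f.2.2]; rfl⟩⟩)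
    (fun a b => rfl)

/-- The map on continuous cohomology induced by a continuous homomorphism. -/
noncomputable def contHPull (ρ : K →* AddAut M) (φ : G →* K) (hφ : Continuous φ) (n : ℕ) :
    contH ρ n →+ contH (ρ.comp φ) n :=
  QuotientAddGroup.map _ _ (pullCocycles ρ φ hφ n) (by
    intro f hf
    rcases n with - | n
    · have h0 : f.1 = 0 := hf
      have : (pullCocycles ρ φ hφ 0 f).1 = 0 := by
        funext g; show f.1 (φ ∘ g) = 0; rw [h0]; rfl
      exact this
    · rcases hf with ⟨h, hc, hd⟩
      exact ⟨fun g => h (φ ∘ g),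
        hc.comp (continuous_pi fun i => hφ.comp (continuous_apply i)),
        by rw [cochainD_pull ρ φ n h]; funext g; rw [hd]; rfl⟩)

end ContinuousCohomology

/-!
By the universal property of the pro-`p` completion `K`, continuous characters `K → 𝔽_p`, i.e.
classes in `H¹(K; 𝔽_p)`, are the same as homomorphisms `A(Γ) → 𝔽_p`, i.e. functions `V → 𝔽_p`.

For `H²`, evaluate a 2-cocycle `f` on each edge `{v, w}` as `f(v, w) - f(w, v)`; as `v` and `w`
commute this kills coboundaries, giving a map `H²(K; 𝔽_p) → 𝔽_p^E`. The cup products of the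
characters dual to the vertices map to the standard basis, so it is onto. It is injective: if
`f` is symmetric on edges, the lifts `(v, 0)` of adjacent generators commute in the central
extension `K ×_f 𝔽_p`, which is again pro-`p`; the resulting map `A(Γ) → K ×_f 𝔽_p` extends to a
continuous section over `K`, and a continuous section is exactly a cochain bounding `f`.

Continuous cohomology is invariant under isomorphisms of topological groups, so `|V|` and `|E|`
are read off the completion.
-/

@[simp]
theorem AddAut.group_one_apply {A : Type*} [Add A] (a : A) : (1 : AddAut A) a = a := rfl

section TrivialCoefficients

variable {K : Type*} [Group K] {M : Type*} [AddCommGroup M]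

theorem cochainD_one_zero (h : (Fin 0 → K) → M) : cochainD (1 : K →* AddAut M) 0 h = 0 := by
  funext g
  simp [cochainD, Subsingleton.elim (Fin.contractNth 0 (· * ·) g) fun i => g i.succ,
    add_neg_cancel]

theorem cochainD_one_one (h : (Fin 1 → K) → M) (g : Fin 2 → K) :
    cochainD (1 : K →* AddAut M) 1 h g = h ![g 1] - h ![g 0 * g 1] + h ![g 0] := by
  have e1 : (fun i : Fin 1 => g i.succ) = ![g 1] := by
    funext k; fin_cases k; rfl
  have e2 : Fin.contractNth 0 (· * ·) g = ![g 0 * g 1] := by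
    funext k; fin_cases k; simp [Fin.contractNth]
  have e3 : Fin.contractNth 1 (· * ·) g = ![g 0] := by
    funext k; fin_cases k; simp [Fin.contractNth]
  simp [cochainD, Fin.sum_univ_two, e1, e2, e3, sub_eq_add_neg, add_comm, add_left_comm]

theorem cochainD_one_two (f : (Fin 2 → K) → M) (g : Fin 3 → K) :
    cochainD (1 : K →* AddAut M) 2 f g
      = f ![g 1, g 2] - f ![g 0 * g 1, g 2] + f ![g 0, g 1 * g 2] - f ![g 0, g 1] := by
  have e1 : (fun i : Fin 2 => g i.succ) = ![g 1, g 2] := by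
    funext k; fin_cases k <;> rfl
  have e2 : Fin.contractNth 0 (· * ·) g = ![g 0 * g 1, g 2] := by
    funext k; fin_cases k <;> simp [Fin.contractNth]
  have e3 : Fin.contractNth 1 (· * ·) g = ![g 0, g 1 * g 2] := by
    funext k; fin_cases k <;> simp [Fin.contractNth]
  have e4 : Fin.contractNth 2 (· * ·) g = ![g 0, g 1] := by
    funext k; fin_cases k <;> simp [Fin.contractNth]
  simp [cochainD, Fin.sum_univ_three, e1, e2, e3, e4, pow_succ, sub_eq_add_neg, add_comm,
    add_left_comm]

theorem cochainD_one_one_comm (h : (Fin 1 → K) → M) {a b : K} (hab : Commute a b) :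
    cochainD (1 : K →* AddAut M) 1 h ![a, b] = cochainD (1 : K →* AddAut M) 1 h ![b, a] := by
  simp only [cochainD_one_one, Matrix.cons_val_zero, Matrix.cons_val_one, hab.eq]
  abel

variable {f : (Fin 2 → K) → M}

theorem apply_one_left_of_cochainD_eq_zero (hf : cochainD (1 : K →* AddAut M) 2 f = 0)
    (a : K) : f ![1, a] = f ![1, 1] := by
  have h := congrFun hf ![1, 1, a]
  simp only [cochainD_one_two, Pi.zero_apply] at h
  simpa [sub_eq_zero] using h

theorem apply_one_right_of_cochainD_eq_zero (hf : cochainD (1 : K →* AddAut M) 2 f = 0)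
    (a : K) : f ![a, 1] = f ![1, 1] := by
  have h := congrFun hf ![a, 1, 1]
  simp only [cochainD_one_two, Pi.zero_apply, Matrix.cons_val_zero, Matrix.cons_val_one,
    Matrix.cons_val, mul_one, sub_add_cancel, sub_eq_zero] at h
  exact h.symm

end TrivialCoefficients

section ContinuousCohomologyClasses

variable {K : Type*} [Group K] [TopologicalSpace K]
  {M : Type*} [AddCommGroup M] [TopologicalSpace M] [IsTopologicalAddGroup M]

def contH.mk (ρ : K →* AddAut M) (n : ℕ) : contCocycles ρ n →+ contH ρ n :=
  QuotientAddGroup.mk' _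

variable {ρ : K →* AddAut M} {n : ℕ}

theorem contH.mk_surjective : Function.Surjective (contH.mk ρ n) :=
  QuotientAddGroup.mk_surjective

theorem contH.mk_eq_zero_iff (f : contCocycles ρ n) :
    contH.mk ρ n f = 0 ↔ f.1 ∈ contCoboundaries ρ n :=
  (QuotientAddGroup.eq_zero_iff f).trans AddSubgroup.mem_addSubgroupOf

variable {G : Type*} [Group G] [TopologicalSpace G]

theorem contHPull_mk (φ : G →* K) (hφ : Continuous φ) (f : contCocycles ρ n) :
    contHPull ρ φ hφ n (contH.mk ρ n f) = contH.mk _ n (pullCocycles ρ φ hφ n f) :=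
  rfl

end ContinuousCohomologyClasses

section Transport

variable {K : Type*} [Group K] [TopologicalSpace K]
  {M : Type*} [AddCommGroup M] [TopologicalSpace M] [IsTopologicalAddGroup M]
  {G : Type*} [Group G] [TopologicalSpace G]

theorem cochainD_comp_symm (ρ : K →* AddAut M) (e : G ≃* K) (n : ℕ)
    (f : (Fin n → G) → M) :
    cochainD ρ n (fun g => f (e.symm ∘ g)) =
      fun g => cochainD (ρ.comp e.toMonoidHom) n f (e.symm ∘ g) := by
  have h : (ρ.comp e.toMonoidHom).comp e.symm.toMonoidHom = ρ := MonoidHom.ext fun k => by simp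
  have := cochainD_pull (ρ.comp e.toMonoidHom) e.symm.toMonoidHom n f
  rwa [h] at this

theorem contHPull_bijective (ρ : K →* AddAut M) (e : G ≃* K) (he : Continuous e.toMonoidHom)
    (he' : Continuous e.symm) (n : ℕ) : Function.Bijective (contHPull ρ e.toMonoidHom he n) := by
  have hcont : ∀ {m : ℕ}, Continuous fun g : Fin m → K => e.symm ∘ g :=
    continuous_pi fun i => he'.comp (continuous_apply i)
  constructor
  · rw [injective_iff_map_eq_zero]
    intro x hx
    obtain ⟨f, rfl⟩ := contH.mk_surjective x
    have hf : f.1 = fun g => f.1 (e ∘ (e.symm ∘ g)) :=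
      funext fun g => congrArg f.1 (funext fun i => (e.apply_symm_apply (g i)).symm)
    rw [contHPull_mk, contH.mk_eq_zero_iff] at hx
    rw [contH.mk_eq_zero_iff]
    rcases n with _ | n
    · change (fun g => f.1 (e ∘ g)) = 0 at hx
      change f.1 = 0
      rw [hf]
      exact funext fun g => congrFun hx (e.symm ∘ g)
    · obtain ⟨h, hc, hd⟩ := hx
      refine ⟨fun g => h (e.symm ∘ g), hc.comp hcont, ?_⟩
      rw [cochainD_comp_symm, hd, hf]
      rfl
  · intro y
    obtain ⟨g, rfl⟩ := contH.mk_surjective y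
    refine ⟨contH.mk ρ n ⟨fun u => g.1 (e.symm ∘ u), g.2.1.comp hcont, ?_⟩, ?_⟩
    · rw [cochainD_comp_symm, g.2.2]
      rfl
    · rw [contHPull_mk]
      refine congrArg _ (Subtype.ext (funext fun u => congrArg g.1 ?_))
      exact funext fun i => e.symm_apply_apply (u i)

theorem card_contH_eq_of_mulEquiv (e : G ≃* K) (he : Continuous e) (he' : Continuous e.symm)
    (n : ℕ) : Nat.card (contH (1 : G →* AddAut M) n) = Nat.card (contH (1 : K →* AddAut M) n) := by
  have h := Nat.card_eq_of_bijective _ (contHPull_bijective (1 : K →* AddAut M) e he he' n)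
  rwa [MonoidHom.one_comp, eq_comm] at h

end Transport

section FirstCohomology

variable {K : Type*} [Group K] [TopologicalSpace K]
  {M : Type*} [AddCommGroup M] [TopologicalSpace M] [IsTopologicalAddGroup M]

theorem contH.mk_one_bijective : Function.Bijective (contH.mk (1 : K →* AddAut M) 1) := by
  refine ⟨(injective_iff_map_eq_zero _).mpr fun f hf => ?_, contH.mk_surjective⟩
  obtain ⟨h, -, hd⟩ := (contH.mk_eq_zero_iff f).mp hf
  exact Subtype.ext (hd.symm.trans (cochainD_one_zero h))

theorem map_mul_of_mem_contCocycles_one {f : (Fin 1 → K) → M}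
    (hf : f ∈ contCocycles (1 : K →* AddAut M) 1) (a b : K) : f ![a * b] = f ![a] + f ![b] := by
  have h := congrFun hf.2 ![a, b]
  simp only [cochainD_one_one, Matrix.cons_val_zero, Matrix.cons_val_one, Pi.zero_apply] at h
  calc f ![a * b] = f ![a * b] + (f ![b] - f ![a * b] + f ![a]) := by rw [h, add_zero]
    _ = f ![a] + f ![b] := by abel

def contCocyclesOneEquiv :
    contCocycles (1 : K →* AddAut M) 1 ≃ (K →ₜ* Multiplicative M) where
  toFun f :=
    { toMonoidHom := MonoidHom.mk' (fun k => Multiplicative.ofAdd (f.1 ![k])) fun a b =>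
        (congrArg Multiplicative.ofAdd (map_mul_of_mem_contCocycles_one f.2 a b)).trans
          (ofAdd_add _ _)
      continuous_toFun := continuous_ofAdd.comp (f.2.1.comp (by fun_prop)) }
  invFun χ := ⟨fun u => (χ (u 0)).toAdd, continuous_toAdd.comp (by fun_prop), by
    funext g
    simp [cochainD_one_one]⟩
  left_inv f := Subtype.ext (funext fun u => congrArg f.1 (List.ofFn_inj.mp rfl))
  right_inv χ := rfl

theorem card_contH_one_eq_card_continuousMonoidHom :
    Nat.card (contH (1 : K →* AddAut M) 1) = Nat.card (K →ₜ* Multiplicative M) :=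
  (Nat.card_eq_of_bijective _ contH.mk_one_bijective).symm.trans
    (Nat.card_congr contCocyclesOneEquiv)

end FirstCohomology

namespace RAAG

variable {V : Type*} {Γ : SimpleGraph V} {G : Type*} [Group G]

open scoped commutatorElement in
theorem commute_gen {v w : V} (h : Γ.Adj v w) : Commute (gen Γ v) (gen Γ w) := by
  have hrel := PresentedGroup.one_of_mem (rels := raagRels Γ) ⟨v, w, h, rfl⟩
  rwa [map_commutatorElement, commutatorElement_eq_one_iff_commute] at hrel

def lift (f : V → G) (hf : ∀ v w, Γ.Adj v w → Commute (f v) (f w)) : RAAG Γ →* G :=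
  PresentedGroup.toGroup (rels := raagRels Γ) <| by
    rintro - ⟨v, w, hvw, rfl⟩
    rw [map_commutatorElement, FreeGroup.lift_apply_of, FreeGroup.lift_apply_of,
      commutatorElement_eq_one_iff_commute]
    exact hf v w hvw

@[simp]
theorem lift_gen (f : V → G) (hf : ∀ v w, Γ.Adj v w → Commute (f v) (f w)) (v : V) :
    lift f hf (gen Γ v) = f v :=
  PresentedGroup.toGroup.of _

theorem hom_ext {φ ψ : RAAG Γ →* G} (h : ∀ v, φ (gen Γ v) = ψ (gen Γ v)) : φ = ψ :=
  PresentedGroup.ext h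

def homEquivOfCommGroup (F : Type*) [CommGroup F] : (RAAG Γ →* F) ≃ (V → F) where
  toFun φ v := φ (gen Γ v)
  invFun f := lift f fun _ _ _ => Commute.all _ _
  left_inv _ := hom_ext fun v => lift_gen _ _ v
  right_inv f := funext (lift_gen f _)

end RAAG

section Profinite

variable {L : Type*} [Group L] [TopologicalSpace L] [IsTopologicalGroup L] [CompactSpace L]

theorem exists_forall_openNormalSubgroup_mk_eq
    (c : ∀ N : OpenNormalSubgroup L, L ⧸ (N : Subgroup L))
    (hc : ∀ N N' : OpenNormalSubgroup L, N ≤ N' → ∀ x : L,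
      (x : L ⧸ (N : Subgroup L)) = c N → (x : L ⧸ (N' : Subgroup L)) = c N') :
    ∃ x : L, ∀ N : OpenNormalSubgroup L, (x : L ⧸ (N : Subgroup L)) = c N := by
  have : Nonempty (OpenNormalSubgroup L) := ⟨⟨⊤, Subgroup.normal_top⟩⟩
  let C : OpenNormalSubgroup L → Set L := fun N => QuotientGroup.mk ⁻¹' {c N}
  have hC : ∀ N, IsClosed (C N) := fun N =>
    haveI := QuotientGroup.discreteTopology N.isOpen'
    isClosed_singleton.preimage QuotientGroup.continuous_mk
  obtain ⟨x, hx⟩ := IsCompact.nonempty_iInter_of_directed_nonempty_isCompact_isClosed C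
    (fun N N' => ⟨N ⊓ N', hc _ _ inf_le_left, hc _ _ inf_le_right⟩)
    (fun N => QuotientGroup.mk_surjective (c N)) (fun N => (hC N).isCompact) hC
  exact ⟨x, Set.mem_iInter.mp hx⟩

variable [TotallyDisconnectedSpace L]

theorem eq_of_forall_openNormalSubgroup_mk_eq {x y : L}
    (h : ∀ N : OpenNormalSubgroup L, (x : L ⧸ (N : Subgroup L)) = y) : x = y := by
  by_contra hne
  obtain ⟨N, hN⟩ := ProfiniteGrp.exist_openNormalSubgroup_sub_open_nhds_of_one
    (isOpen_compl_singleton (x := x⁻¹ * y)) fun h1 => hne (inv_mul_eq_one.mp h1.symm)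
  exact hN (QuotientGroup.eq.mp (h N)) rfl

theorem continuous_of_forall_openNormalSubgroup_continuous_mk {X : Type*} [TopologicalSpace X]
    {g : X → L}
    (hg : ∀ N : OpenNormalSubgroup L, Continuous fun x => (g x : L ⧸ (N : Subgroup L))) :
    Continuous g := by
  refine continuous_iff_continuousAt.mpr fun x => continuousAt_def.mpr fun U hU => ?_
  have hU' : (g x * ·) ⁻¹' U ∈ nhds (1 : L) :=
    (continuous_const_mul (g x)).continuousAt.preimage_mem_nhds (by rwa [mul_one])
  obtain ⟨N, hN⟩ := ProfiniteGrp.exist_openNormalSubgroup_sub_open_nhds_of_one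
    (isOpen_interior) (mem_interior_iff_mem_nhds.mpr hU')
  have := QuotientGroup.discreteTopology N.isOpen'
  have hnbhd := ((hg N).isOpen_preimage _ (isOpen_discrete {(g x : L ⧸ (N : Subgroup L))})).mem_nhds
    (Set.mem_singleton _)
  refine Filter.mem_of_superset hnbhd fun x' hx' => ?_
  have h := interior_subset (hN (QuotientGroup.eq.mp (Set.mem_singleton_iff.mp hx').symm))
  simpa using h

end Profinite

theorem IsProPCompletion.exists_continuous_lift {p : ℕ} {G K : Type*} [Group G] [Group K]
    [TopologicalSpace K] {ι : G →* K} (hK : IsProPCompletion p G K ι) {L : Type} [Group L]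
    [TopologicalSpace L] (hL : IsProPGroup p L) (ψ : G →* L) :
    ∃ σ : K →* L, Continuous σ ∧ σ.comp ι = ψ := by
  have := hL.topGroup
  have := hL.compact
  have := hL.totallyDisconnected
  have hdisc (N : OpenNormalSubgroup L) := QuotientGroup.discreteTopology N.isOpen'
  have hφ (N : OpenNormalSubgroup L) : ∃ φ : K →* L ⧸ (N : Subgroup L),
      Continuous φ ∧ φ.comp ι = (QuotientGroup.mk' _).comp ψ :=
    have := Subgroup.quotient_finite_of_isOpen _ N.isOpen'
    (hK.universal _ (hL.quot_isPGroup _ N.isOpen') _).exists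
  choose φ hφc hφι using hφ
  have hφι' (N : OpenNormalSubgroup L) (g : G) : φ N (ι g) = ψ g :=
    DFunLike.congr_fun (hφι N) g
  have compat (k : K) (N N' : OpenNormalSubgroup L) (hle : N ≤ N') (x : L)
      (hx : (x : L ⧸ (N : Subgroup L)) = φ N k) : (x : L ⧸ (N' : Subgroup L)) = φ N' k := by
    let q := QuotientGroup.map (N : Subgroup L) (N' : Subgroup L) (MonoidHom.id L) fun _ h => hle h
    have hq : q ∘ φ N = φ N' :=
      Continuous.ext_on hK.dense (continuous_of_discreteTopology.comp (hφc N)) (hφc N')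
        (by rintro - ⟨g, rfl⟩; simp only [Function.comp_apply, hφι']; rfl)
    rw [← hq, Function.comp_apply, ← hx]
    rfl
  -- the compatible images `φ N k` of `k` glue to a point of `L` by compactness
  choose σ hσ using fun k => exists_forall_openNormalSubgroup_mk_eq (fun N => φ N k) (compat k)
  have hσ_mul (a b : K) : σ (a * b) = σ a * σ b :=
    eq_of_forall_openNormalSubgroup_mk_eq fun N => by
      rw [QuotientGroup.mk_mul, hσ, hσ, hσ, map_mul]
  refine ⟨MonoidHom.mk' σ hσ_mul, ?_, ?_⟩
  · refine continuous_of_forall_openNormalSubgroup_continuous_mk fun N => ?_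
    convert hφc N using 1
    exact funext fun k => hσ k N
  · exact MonoidHom.ext fun g => eq_of_forall_openNormalSubgroup_mk_eq fun N => by
      simp [hσ, hφι']

section Completion

variable {p : ℕ} {G K : Type*} [Group G] [Group K] [TopologicalSpace K] {ι : G →* K}

noncomputable def IsProPCompletion.continuousMonoidHomEquiv (hK : IsProPCompletion p G K ι)
    (F : Type) [Group F] [Finite F] [TopologicalSpace F] [DiscreteTopology F]
    (hF : IsPGroup p F) : (K →ₜ* F) ≃ (G →* F) where
  toFun φ := φ.toMonoidHom.comp ι
  invFun f := ⟨(hK.universal F hF f).exists.choose, (hK.universal F hF f).exists.choose_spec.1⟩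
  left_inv φ := ContinuousMonoidHom.ext fun k => DFunLike.congr_fun ((hK.universal F hF _).unique
    (hK.universal F hF _).exists.choose_spec ⟨φ.continuous, rfl⟩) k
  right_inv f := (hK.universal F hF f).exists.choose_spec.2

variable [NeZero p] [TopologicalSpace (ZMod p)] [DiscreteTopology (ZMod p)]
  {V : Type*} {Γ : SimpleGraph V} {ι : RAAG Γ →* K}

noncomputable def IsProPCompletion.zmodCharEquiv (hK : IsProPCompletion p (RAAG Γ) K ι) :
    (K →ₜ* Multiplicative (ZMod p)) ≃ (V → Multiplicative (ZMod p)) :=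
  (hK.continuousMonoidHomEquiv _ ZModModule.isPGroup_multiplicative).trans
    (RAAG.homEquivOfCommGroup _)

theorem IsProPCompletion.card_zmodChar [Finite V] (hK : IsProPCompletion p (RAAG Γ) K ι) :
    Nat.card (K →ₜ* Multiplicative (ZMod p)) = p ^ Nat.card V := by
  rw [Nat.card_congr hK.zmodCharEquiv, Nat.card_fun, Nat.card_congr Multiplicative.toAdd,
    Nat.card_zmod]

theorem IsProPCompletion.exists_dual_characters [DecidableEq V]
    (hK : IsProPCompletion p (RAAG Γ) K ι) :
    ∃ x : V → K →ₜ* Multiplicative (ZMod p),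
      ∀ v w, (x v (ι (RAAG.gen Γ w))).toAdd = if v = w then 1 else 0 :=
  ⟨fun v => hK.zmodCharEquiv.symm fun w => .ofAdd (if v = w then 1 else 0), fun _ w =>
    congrArg Multiplicative.toAdd (congrFun (hK.zmodCharEquiv.apply_symm_apply _) w)⟩

end Completion

structure NormalizedTwoCocycle (K M : Type*) [Group K] [AddCommGroup M] where
  toFun : K → K → M
  cocycle : ∀ x y z, toFun x y + toFun (x * y) z = toFun y z + toFun x (y * z)
  map_one_left : ∀ x, toFun 1 x = 0
  map_one_right : ∀ x, toFun x 1 = 0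

namespace NormalizedTwoCocycle

variable {K M : Type*} [Group K] [AddCommGroup M] (c : NormalizedTwoCocycle K M)

/-- The central extension of `K` by `M` with multiplication
`(a, m) * (b, n) = (a * b, m + n + c a b)`. -/
def Extension (_ : NormalizedTwoCocycle K M) : Type _ := K × M

instance : Group c.Extension where
  mul a b := (a.1 * b.1, a.2 + b.2 + c.toFun a.1 b.1)
  one := ((1 : K), (0 : M))
  inv a := (a.1⁻¹, -a.2 - c.toFun a.1 a.1⁻¹)
  mul_assoc a b d := Prod.ext (mul_assoc a.1 b.1 d.1) <| by
    change a.2 + b.2 + c.toFun a.1 b.1 + d.2 + c.toFun (a.1 * b.1) d.1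
      = a.2 + (b.2 + d.2 + c.toFun b.1 d.1) + c.toFun a.1 (b.1 * d.1)
    linear_combination (norm := abel) c.cocycle a.1 b.1 d.1
  one_mul a := Prod.ext (one_mul a.1) <| by
    change 0 + a.2 + c.toFun 1 a.1 = a.2
    rw [c.map_one_left, zero_add, add_zero]
  mul_one a := Prod.ext (mul_one a.1) <| by
    change a.2 + 0 + c.toFun a.1 1 = a.2
    rw [c.map_one_right, add_zero, add_zero]
  inv_mul_cancel a := Prod.ext (inv_mul_cancel a.1) <| by
    change -a.2 - c.toFun a.1 a.1⁻¹ + a.2 + c.toFun a.1⁻¹ a.1 = 0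
    have h := c.cocycle a.1 a.1⁻¹ a.1
    rw [mul_inv_cancel, inv_mul_cancel, c.map_one_left, c.map_one_right] at h
    linear_combination (norm := abel) -h

def mkExt (k : K) (m : M) : c.Extension := (k, m)

def fst : c.Extension →* K := MonoidHom.mk' Prod.fst fun _ _ => rfl

def snd : c.Extension → M := Prod.snd

@[simp] theorem fst_mkExt (k : K) (m : M) : c.fst (c.mkExt k m) = k := rfl

@[simp] theorem snd_mkExt (k : K) (m : M) : c.snd (c.mkExt k m) = m := rfl

theorem mkExt_mul_mkExt (k k' : K) (m m' : M) :
    c.mkExt k m * c.mkExt k' m' = c.mkExt (k * k') (m + m' + c.toFun k k') := rfl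

theorem snd_mul (a b : c.Extension) :
    c.snd (a * b) = c.snd a + c.snd b + c.toFun (c.fst a) (c.fst b) :=
  rfl

theorem pow_of_fst_eq_one {z : c.Extension} (hz : c.fst z = 1) (n : ℕ) :
    z ^ n = c.mkExt 1 (n • c.snd z) := by
  induction n with
  | zero => rw [pow_zero, zero_nsmul]; rfl
  | succ n ih =>
    rw [pow_succ, ih, show z = c.mkExt 1 (c.snd z) from Prod.ext hz rfl, mkExt_mul_mkExt,
      c.map_one_left]
    simp [succ_nsmul]

section Topology

variable [TopologicalSpace K] [TopologicalSpace M]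

instance : TopologicalSpace c.Extension := inferInstanceAs (TopologicalSpace (K × M))

theorem isTopologicalGroup [IsTopologicalGroup K] [IsTopologicalAddGroup M]
    (hc : Continuous fun q : K × K => c.toFun q.1 q.2) : IsTopologicalGroup c.Extension where
  continuous_mul := by
    change Continuous fun q : (K × M) × (K × M) =>
      ((q.1.1 * q.2.1, q.1.2 + q.2.2 + c.toFun q.1.1 q.2.1) : K × M)
    have : Continuous fun q : (K × M) × (K × M) => c.toFun q.1.1 q.2.1 :=
      hc.comp (f := fun q : (K × M) × (K × M) => (q.1.1, q.2.1)) (by fun_prop)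
    fun_prop
  continuous_inv := by
    change Continuous fun a : K × M => ((a.1⁻¹, -a.2 - c.toFun a.1 a.1⁻¹) : K × M)
    have : Continuous fun a : K × M => c.toFun a.1 a.1⁻¹ :=
      hc.comp (f := fun a : K × M => (a.1, a.1⁻¹)) (by fun_prop)
    fun_prop

theorem continuous_fst : Continuous c.fst := _root_.continuous_fst

theorem continuous_snd : Continuous c.snd := _root_.continuous_snd

end Topology

end NormalizedTwoCocycle

theorem IsProPGroup.of_isPGroup_ker {p : ℕ} {E K : Type*} [Group E] [TopologicalSpace E]
    [IsTopologicalGroup E] [CompactSpace E] [T2Space E] [TotallyDisconnectedSpace E] [Group K]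
    [TopologicalSpace K] (hK : IsProPGroup p K) (π : E →* K) (hπ : Function.Surjective π)
    (hπo : IsOpenMap π) (hker : IsPGroup p π.ker) : IsProPGroup p E := by
  refine ⟨inferInstance, inferInstance, inferInstance, inferInstance, fun N _ hN => ?_⟩
  have : (N.map π).Normal := Subgroup.Normal.map inferInstance π hπ
  let q := QuotientGroup.map N (N.map π) π (Subgroup.le_comap_map π N)
  have hq : q.ker ≤ π.ker.map (QuotientGroup.mk' N) := by
    rintro y hy
    obtain ⟨x, rfl⟩ := QuotientGroup.mk_surjective y
    obtain ⟨n, hn, hnx⟩ := (QuotientGroup.eq_one_iff _).mp hy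
    refine ⟨x * n⁻¹, by simp [hnx], QuotientGroup.eq.mpr ?_⟩
    simpa using N.inv_mem hn
  have hquot := hK.quot_isPGroup (N.map π) (hπo _ hN)
  exact ((hquot.of_equiv Subgroup.topEquiv.symm).comap_of_ker_isPGroup q
    ((hker.map _).to_le hq)).of_equiv Subgroup.topEquiv

namespace NormalizedTwoCocycle

variable {p : ℕ} {K M : Type*} [Group K] [AddCommGroup M] (c : NormalizedTwoCocycle K M)

theorem isPGroup_ker_fst (hM : IsPGroup p (Multiplicative M)) : IsPGroup p c.fst.ker := by
  rintro ⟨z, hz⟩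
  obtain ⟨k, hk⟩ := hM (.ofAdd (c.snd z))
  refine ⟨k, Subtype.ext ?_⟩
  have h0 : p ^ k • c.snd z = 0 := congrArg Multiplicative.toAdd hk
  rw [Subgroup.coe_pow, c.pow_of_fst_eq_one hz, h0]
  rfl

theorem isProPGroup [TopologicalSpace K] [TopologicalSpace M] [IsTopologicalAddGroup M]
    [CompactSpace M] [T2Space M] [TotallyDisconnectedSpace M] (hK : IsProPGroup p K)
    (hM : IsPGroup p (Multiplicative M)) (hc : Continuous fun q : K × K => c.toFun q.1 q.2) :
    IsProPGroup p c.Extension := by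
  have := hK.topGroup
  have := hK.compact
  have := hK.t2
  have := hK.totallyDisconnected
  have := c.isTopologicalGroup hc
  have : CompactSpace c.Extension := inferInstanceAs (CompactSpace (K × M))
  have : T2Space c.Extension := inferInstanceAs (T2Space (K × M))
  have : TotallyDisconnectedSpace c.Extension := inferInstanceAs (TotallyDisconnectedSpace (K × M))
  exact hK.of_isPGroup_ker c.fst (fun k => ⟨c.mkExt k 0, rfl⟩) isOpenMap_fst
    (c.isPGroup_ker_fst hM)

end NormalizedTwoCocycle

theorem IsProPCompletion.exists_splitting {p : ℕ} {V : Type*} {Γ : SimpleGraph V} {K : Type}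
    [Group K] [TopologicalSpace K] {ι : RAAG Γ →* K} (hK : IsProPCompletion p (RAAG Γ) K ι)
    {M : Type} [AddCommGroup M] [TopologicalSpace M] [IsTopologicalAddGroup M] [CompactSpace M]
    [T2Space M] [TotallyDisconnectedSpace M] (hM : IsPGroup p (Multiplicative M))
    (c : NormalizedTwoCocycle K M) (hc : Continuous fun q : K × K => c.toFun q.1 q.2)
    (hsym : ∀ v w, Γ.Adj v w → c.toFun (ι (RAAG.gen Γ v)) (ι (RAAG.gen Γ w)) =
      c.toFun (ι (RAAG.gen Γ w)) (ι (RAAG.gen Γ v))) :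
    ∃ s : K → M, Continuous s ∧ ∀ a b, s (a * b) = s a + s b + c.toFun a b := by
  have := hK.proP.t2
  let ψ : RAAG Γ →* c.Extension := RAAG.lift (fun v => c.mkExt (ι (RAAG.gen Γ v)) 0)
    fun v w h => by
      rw [Commute, SemiconjBy, c.mkExt_mul_mkExt, c.mkExt_mul_mkExt, hsym v w h,
        ((RAAG.commute_gen h).map ι).eq]
  have hψ : c.fst.comp ψ = ι := RAAG.hom_ext fun v => by simp [ψ]
  obtain ⟨σ, hσc, hσι⟩ := hK.exists_continuous_lift (c.isProPGroup hK.proP hM hc) ψ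
  have hσ_fst (k : K) : c.fst (σ k) = k := by
    refine congrFun (Continuous.ext_on hK.dense (c.continuous_fst.comp hσc) continuous_id ?_) k
    rintro - ⟨g, rfl⟩
    rw [← hσι] at hψ
    exact DFunLike.congr_fun hψ g
  refine ⟨fun k => c.snd (σ k), c.continuous_snd.comp hσc, fun a b => ?_⟩
  simp only [map_mul, c.snd_mul, hσ_fst]

section SecondCohomology

variable {K : Type*} [Group K] {M : Type*} [AddCommGroup M]

def NormalizedTwoCocycle.ofCochain (f : (Fin 2 → K) → M)
    (hf : cochainD (1 : K →* AddAut M) 2 f = 0) : NormalizedTwoCocycle K M where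
  toFun a b := f ![a, b] - f ![1, 1]
  cocycle x y z := by
    have h := congrFun hf ![x, y, z]
    simp only [cochainD_one_two, Matrix.cons_val_zero, Matrix.cons_val_one, Matrix.cons_val,
      Pi.zero_apply] at h
    linear_combination (norm := abel) -h
  map_one_left x := by rw [apply_one_left_of_cochainD_eq_zero hf, sub_self]
  map_one_right x := by rw [apply_one_right_of_cochainD_eq_zero hf, sub_self]

theorem cochainD_one_one_eq_of_splitting {f : (Fin 2 → K) → M}
    (hf : cochainD (1 : K →* AddAut M) 2 f = 0) {s : K → M}
    (hs : ∀ a b, s (a * b) = s a + s b + (NormalizedTwoCocycle.ofCochain f hf).toFun a b) :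
    cochainD (1 : K →* AddAut M) 1 (fun u => f ![1, 1] - s (u 0)) = f := by
  funext g
  simp only [cochainD_one_one, Matrix.cons_val_zero, hs, NormalizedTwoCocycle.ofCochain]
  rw [show f g = f ![g 0, g 1] from congrArg f (List.ofFn_inj.mp rfl)]
  abel

variable [TopologicalSpace K] [TopologicalSpace M] [IsTopologicalAddGroup M]

/-- The value of a 2-cocycle on the torus `ℤ² → K` spanned by a commuting pair. -/
def contH.evalCommute {a b : K} (hab : Commute a b) : contH (1 : K →* AddAut M) 2 →+ M :=
  QuotientAddGroup.lift _
    (AddMonoidHom.mk' (fun f : contCocycles (1 : K →* AddAut M) 2 => f.1 ![a, b] - f.1 ![b, a])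
      fun f g => by simp only [AddSubgroup.coe_add, Pi.add_apply]; abel) <| by
    rintro f ⟨h, -, hd⟩
    change f.1 ![a, b] - f.1 ![b, a] = 0
    rw [← show cochainD _ 1 h = f.1 from hd, cochainD_one_one_comm h hab, sub_self]

end SecondCohomology

section CupProduct

variable {K : Type*} [Group K] [TopologicalSpace K]
  {R : Type*} [CommRing R] [TopologicalSpace R] [IsTopologicalRing R]

def cupProduct (χ ψ : K →ₜ* Multiplicative R) : contCocycles (1 : K →* AddAut R) 2 :=
  ⟨fun g => (χ (g 0)).toAdd * (ψ (g 1)).toAdd,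
    ((continuous_toAdd.comp χ.continuous).comp (continuous_apply 0)).mul
      ((continuous_toAdd.comp ψ.continuous).comp (continuous_apply 1)), by
    funext g
    simp only [cochainD_one_two, Matrix.cons_val_zero, Matrix.cons_val_one, Matrix.cons_val_fin_one,
      map_mul, toAdd_mul, Pi.zero_apply]
    ring⟩

theorem cupProduct_apply (χ ψ : K →ₜ* Multiplicative R) (a b : K) :
    (cupProduct χ ψ).1 ![a, b] = (χ a).toAdd * (ψ b).toAdd :=
  rfl

end CupProduct

theorem Sym2.out_mk_eq_or_eq_swap {V : Type*} (v w : V) :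
    Quot.out s(v, w) = (v, w) ∨ Quot.out s(v, w) = (w, v) := by
  have h : s((Quot.out s(v, w)).1, (Quot.out s(v, w)).2) = s(v, w) := Quot.out_eq _
  rcases Sym2.eq_iff.mp h with ⟨h1, h2⟩ | ⟨h1, h2⟩
  · exact .inl (Prod.ext h1 h2)
  · exact .inr (Prod.ext h1 h2)

namespace SimpleGraph

variable {V : Type*} {Γ : SimpleGraph V}

theorem adj_out (e : Γ.edgeSet) : Γ.Adj (Quot.out e.1).1 (Quot.out e.1).2 := by
  have h : s((Quot.out e.1).1, (Quot.out e.1).2) = e.1 := Quot.out_eq _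
  rw [← Γ.mem_edgeSet, h]
  exact e.2

theorem out_ne_swap_out (e e' : Γ.edgeSet) : Quot.out e.1 ≠ (Quot.out e'.1).swap := by
  intro h
  have hee' : e = e' := Subtype.ext <| by
    rw [← Quot.out_eq e.1, ← Quot.out_eq e'.1, h]
    exact Sym2.eq_swap
  subst hee'
  exact (adj_out e).ne (congrArg Prod.fst h)

theorem out_inj {e e' : Γ.edgeSet} : Quot.out e.1 = Quot.out e'.1 ↔ e = e' :=
  ⟨fun h => Subtype.ext (by rw [← Quot.out_eq e.1, h, Quot.out_eq]), fun h => h ▸ rfl⟩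

end SimpleGraph

section RAAGCohomology

variable {p : ℕ} {V : Type*} {Γ : SimpleGraph V} {K : Type} [Group K] [TopologicalSpace K]
  {ι : RAAG Γ →* K}

theorem IsProPCompletion.mem_contCoboundaries_two (hK : IsProPCompletion p (RAAG Γ) K ι)
    {M : Type} [AddCommGroup M] [TopologicalSpace M] [IsTopologicalAddGroup M] [CompactSpace M]
    [T2Space M] [TotallyDisconnectedSpace M] (hM : IsPGroup p (Multiplicative M))
    (f : contCocycles (1 : K →* AddAut M) 2)
    (hsym : ∀ v w, Γ.Adj v w → f.1 ![ι (RAAG.gen Γ v), ι (RAAG.gen Γ w)] =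
      f.1 ![ι (RAAG.gen Γ w), ι (RAAG.gen Γ v)]) :
    f.1 ∈ contCoboundaries (1 : K →* AddAut M) 2 := by
  let c := NormalizedTwoCocycle.ofCochain f.1 f.2.2
  have hc : Continuous fun q : K × K => c.toFun q.1 q.2 :=
    (f.2.1.comp (by fun_prop)).sub continuous_const
  obtain ⟨s, hs, hsplit⟩ := hK.exists_splitting hM c hc fun v w h => by
    simp only [c, NormalizedTwoCocycle.ofCochain, hsym v w h]
  exact ⟨fun u => f.1 ![1, 1] - s (u 0), continuous_const.sub (hs.comp (continuous_apply 0)),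
    cochainD_one_one_eq_of_splitting f.2.2 hsplit⟩

variable {M : Type*} [AddCommGroup M] [TopologicalSpace M] [IsTopologicalAddGroup M]

/-- Edges are oriented by `Quot.out`; the orientation only affects signs. -/
noncomputable def contHTwoEdgeEval (ι : RAAG Γ →* K) :
    contH (1 : K →* AddAut M) 2 →+ (Γ.edgeSet → M) :=
  AddMonoidHom.pi fun e => contH.evalCommute ((RAAG.commute_gen (Γ.adj_out e)).map ι)

theorem contHTwoEdgeEval_mk (f : contCocycles (1 : K →* AddAut M) 2) (e : Γ.edgeSet) :
    contHTwoEdgeEval ι (contH.mk _ 2 f) e =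
      f.1 ![ι (RAAG.gen Γ (Quot.out e.1).1), ι (RAAG.gen Γ (Quot.out e.1).2)] -
        f.1 ![ι (RAAG.gen Γ (Quot.out e.1).2), ι (RAAG.gen Γ (Quot.out e.1).1)] :=
  rfl

variable [TopologicalSpace (ZMod p)] [DiscreteTopology (ZMod p)]
  [IsTopologicalAddGroup (ZMod p)]

theorem IsProPCompletion.contHTwoEdgeEval_injective [NeZero p]
    (hK : IsProPCompletion p (RAAG Γ) K ι) :
    Function.Injective (contHTwoEdgeEval (M := ZMod p) ι) := by
  rw [injective_iff_map_eq_zero]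
  intro x hx
  obtain ⟨f, rfl⟩ := contH.mk_surjective x
  rw [contH.mk_eq_zero_iff]
  refine hK.mem_contCoboundaries_two ZModModule.isPGroup_multiplicative f fun v w h => ?_
  have he := congrFun hx ⟨s(v, w), h⟩
  rw [contHTwoEdgeEval_mk, Pi.zero_apply, sub_eq_zero] at he
  rcases Sym2.out_mk_eq_or_eq_swap v w with h' | h' <;> simp only [h'] at he
  · exact he
  · exact he.symm

theorem IsProPCompletion.contHTwoEdgeEval_surjective [NeZero p] [Finite V]
    (hK : IsProPCompletion p (RAAG Γ) K ι) :
    Function.Surjective (contHTwoEdgeEval (M := ZMod p) ι) := by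
  classical
  have := Fintype.ofFinite Γ.edgeSet
  obtain ⟨x, hx⟩ := hK.exists_dual_characters
  intro l
  refine ⟨∑ e, (l e).val • contH.mk _ 2 (cupProduct (x (Quot.out e.1).1) (x (Quot.out e.1).2)),
    ?_⟩
  funext e'
  simp only [map_sum, map_nsmul, Finset.sum_apply, Pi.smul_apply, contHTwoEdgeEval_mk,
    cupProduct_apply, hx]
  have hdual (e : Γ.edgeSet) :
      (((if (Quot.out e.1).1 = (Quot.out e'.1).1 then 1 else 0) *
          if (Quot.out e.1).2 = (Quot.out e'.1).2 then 1 else 0) -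
        (if (Quot.out e.1).1 = (Quot.out e'.1).2 then 1 else 0) *
          if (Quot.out e.1).2 = (Quot.out e'.1).1 then 1 else 0 : ZMod p) =
        if e = e' then 1 else 0 := by
    have hswap :
        ¬((Quot.out e.1).1 = (Quot.out e'.1).2 ∧ (Quot.out e.1).2 = (Quot.out e'.1).1) :=
      fun h => Γ.out_ne_swap_out e e' (Prod.ext h.1 h.2)
    rw [ite_zero_mul_ite_zero, ite_zero_mul_ite_zero, if_neg hswap, sub_zero, one_mul]
    exact if_congr (Prod.ext_iff.symm.trans Γ.out_inj) rfl rfl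
  simp only [hdual, smul_ite, smul_zero, Finset.sum_ite_eq', Finset.mem_univ, if_true, nsmul_eq_mul,
    mul_one, ZMod.natCast_val, ZMod.cast_id', id]

end RAAGCohomology

section Counting

variable {p : ℕ} [NeZero p] [TopologicalSpace (ZMod p)] [DiscreteTopology (ZMod p)]
  [IsTopologicalAddGroup (ZMod p)] {V : Type*} [Fintype V] {Γ : SimpleGraph V} {K : Type}
  [Group K] [TopologicalSpace K] {ι : RAAG Γ →* K}

theorem IsProPCompletion.card_contH_one (hK : IsProPCompletion p (RAAG Γ) K ι) :
    Nat.card (contH (1 : K →* AddAut (ZMod p)) 1) = p ^ Fintype.card V := by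
  rw [card_contH_one_eq_card_continuousMonoidHom, hK.card_zmodChar, Nat.card_eq_fintype_card]

theorem IsProPCompletion.card_contH_two [Fintype Γ.edgeSet]
    (hK : IsProPCompletion p (RAAG Γ) K ι) :
    Nat.card (contH (1 : K →* AddAut (ZMod p)) 2) = p ^ Γ.edgeFinset.card := by
  rw [Nat.card_eq_of_bijective _
      ⟨hK.contHTwoEdgeEval_injective, hK.contHTwoEdgeEval_surjective⟩,
    Nat.card_fun, Nat.card_zmod, Nat.card_eq_fintype_card, SimpleGraph.edgeFinset_card]

end Counting

/-- If the pro-`p` completions of `A(Γ)` and `A(Γ')` are isomorphic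
(as topological groups), then `Γ` and `Γ'` have the same numbers of vertices and edges;
indeed the continuous cohomology groups `H¹` and `H²` of the pro-`p` completion with
trivial `ℤ/p` coefficients have orders `p^{|V(Γ)|}` and `p^{|E(Γ)|}` (i.e. ranks
`|V(Γ)|` and `|E(Γ)|`) respectively. -/
theorem proP_completion_detects_vertices_and_edges {V V' : Type} [Fintype V] [Fintype V']
    (Γ : SimpleGraph V) (Γ' : SimpleGraph V')
    [DecidableRel Γ.Adj] [DecidableRel Γ'.Adj] (p : ℕ) [Fact p.Prime]
    (K K' : Type) [Group K] [TopologicalSpace K] [Group K'] [TopologicalSpace K']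
    (ι : RAAG Γ →* K) (ι' : RAAG Γ' →* K')
    (hK : IsProPCompletion p (RAAG Γ) K ι) (hK' : IsProPCompletion p (RAAG Γ') K' ι')
    [TopologicalSpace (ZMod p)] [DiscreteTopology (ZMod p)]
    [IsTopologicalAddGroup (ZMod p)]
    (hiso : ∃ e : K ≃* K', Continuous e ∧ Continuous e.symm) :
    Fintype.card V = Fintype.card V' ∧ Γ.edgeFinset.card = Γ'.edgeFinset.card ∧
    Nat.card (contH (1 : K →* AddAut (ZMod p)) 1) = p ^ Fintype.card V ∧
    Nat.card (contH (1 : K →* AddAut (ZMod p)) 2) = p ^ Γ.edgeFinset.card := by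
  obtain ⟨e, he, he'⟩ := hiso
  have hH := card_contH_eq_of_mulEquiv (M := ZMod p) e he he'
  have hp := Nat.pow_right_injective (Fact.out : p.Prime).two_le
  exact ⟨hp (hK.card_contH_one.symm.trans ((hH 1).trans hK'.card_contH_one)),
    hp (hK.card_contH_two.symm.trans ((hH 2).trans hK'.card_contH_two)),
    hK.card_contH_one, hK.card_contH_two⟩
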